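/- arXiv:1708.08538 — 4 statements merged into one kernel-verified Lean document; each statement's English description precedes it below -/
import Mathlib

section
/- Let X be a complex Banach space and Δ : S(c₀(Γ)) → S(X) a surjective isometry between unit spheres. For each n ∈ Γ and λ ∈ 𝕋 (unit circle), let A(n,λ) = {x ∈ S(c₀(Γ)) : x(n) = λ}. Then the set supp(n,λ) = {φ ∈ X* : ‖φ‖ = 1 and φ⁻¹({1}) ∩ S(X) ⊇ Δ(A(n,λ)) with equality φ⁻¹({1}) = Δ(A(n,λ))} is nonempty. -/
/-
Write `σ x` for the preimage under `Δ` of `-Δ x`. Then `σ` is an isometric involution of `S(c₀(Γ))`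
with `‖σ x - x‖ = 2`, and a perturbation argument shows `(σ x)(k) = -x(k)` whenever `|x(k)| = 1`.
Consequently `‖Δ x + Δ a‖ = 2` exactly when `x` and `a` share a coordinate of modulus one; for
`a = λ eₙ` this says that `Δ(A(n,λ))` is the star `{y ∈ S(X) : ‖y + Δ a‖ = 2}` of `Δ a`, and that
`‖y + z‖ = 2` for all `y, z` in it. These two facts make the star convex, so Hahn–Banach separates
it from the open unit ball by a norm-one functional, whose face in `S(X)` is exactly the star.
-/

open ZeroAtInfty Metric

/-- The canonical basis vector `e n` of `c₀(Γ)`. -/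
noncomputable def stdBasis {Γ : Type*} [TopologicalSpace Γ] [DiscreteTopology Γ] [DecidableEq Γ]
    (n : Γ) : C₀(Γ, ℂ) where
  toFun := fun k => if k = n then 1 else 0
  continuous_toFun := continuous_of_discreteTopology
  zero_at_infty' := by
    have h : (fun k => if k = n then (1 : ℂ) else 0) =ᶠ[Filter.cocompact Γ] 0 := by
      refine Filter.mem_cocompact.2 ⟨{n}, isCompact_singleton, ?_⟩
      intro k hk
      simp only [Set.mem_compl_iff, Set.mem_singleton_iff] at hk
      simp [hk]
    exact Filter.Tendsto.congr' h.symm tendsto_const_nhds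

section SphereStar

variable {X : Type*} [NormedAddCommGroup X]

/-- The star of `d`, as in the literature on Tingley's problem. -/
def sphereStar (d : X) : Set X := {y | ‖y‖ = 1 ∧ ‖y + d‖ = 2}

theorem mem_sphereStar_of_norm_le_one {d y : X} (hd : ‖d‖ ≤ 1) (hy : ‖y‖ ≤ 1)
    (h : ‖y + d‖ = 2) : y ∈ sphereStar d :=
  ⟨le_antisymm hy (by linarith [norm_add_le y d]), h⟩

variable [NormedSpace ℝ X]

theorem self_mem_sphereStar {d : X} (hd : ‖d‖ = 1) : d ∈ sphereStar d :=
  ⟨hd, by rw [← two_smul ℝ, norm_smul, hd]; norm_num⟩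

theorem StrongDual.apply_le_one {ψ : StrongDual ℝ X} (hψ : ‖ψ‖ ≤ 1) {x : X} (hx : ‖x‖ ≤ 1) :
    ψ x ≤ 1 :=
  (Real.le_norm_self _).trans (by simpa using ψ.le_of_opNorm_le_of_le hψ hx)

theorem mem_sphereStar_of_dual_eq_one {ψ : StrongDual ℝ X} (hψ : ‖ψ‖ ≤ 1) {d y : X}
    (hd : ‖d‖ ≤ 1) (hy : ‖y‖ ≤ 1) (hψd : ψ d = 1) (hψy : ψ y = 1) : y ∈ sphereStar d := by
  refine mem_sphereStar_of_norm_le_one hd hy (le_antisymm ?_ ?_)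
  · linarith [norm_add_le y d]
  · calc (2 : ℝ) = ψ (y + d) := by rw [map_add, hψy, hψd]; norm_num
      _ ≤ ‖ψ (y + d)‖ := Real.le_norm_self _
      _ ≤ ‖y + d‖ := by simpa using ψ.le_of_opNorm_le hψ (y + d)

theorem exists_dual_eq_one_of_mem_sphereStar {d y : X} (hd : ‖d‖ ≤ 1) (hy : y ∈ sphereStar d) :
    ∃ ψ : StrongDual ℝ X, ‖ψ‖ ≤ 1 ∧ ψ y = 1 ∧ ψ d = 1 := by
  obtain ⟨ψ, hψ, hψyd⟩ := exists_dual_vector'' ℝ (y + d)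
  rw [hy.2, map_add] at hψyd
  norm_num at hψyd
  have hψy := ψ.apply_le_one hψ hy.1.le
  have hψd := ψ.apply_le_one hψ hd
  exact ⟨ψ, hψ, by linarith, by linarith⟩

theorem segment_subset_sphereStar {d y : X} (hd : ‖d‖ = 1) (hy : y ∈ sphereStar d) :
    segment ℝ y d ⊆ sphereStar d := by
  obtain ⟨ψ, hψ, hψy, hψd⟩ := exists_dual_eq_one_of_mem_sphereStar hd.le hy
  have hface : Convex ℝ (closedBall (0 : X) 1 ∩ {x | ψ x = 1}) :=
    (convex_closedBall 0 1).inter (convex_hyperplane ψ.toLinearMap.isLinear 1)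
  intro w hw
  obtain ⟨hw1, hψw⟩ := hface.segment_subset ⟨by simp [hy.1], hψy⟩ ⟨by simp [hd], hψd⟩ hw
  exact mem_sphereStar_of_dual_eq_one hψ hd.le (by simpa using hw1) hψd hψw

theorem convex_sphereStar {d : X} (hd : ‖d‖ = 1)
    (h : ∀ y ∈ sphereStar d, ∀ z ∈ sphereStar d, ‖y + z‖ = 2) : Convex ℝ (sphereStar d) := by
  intro u hu v hv a b ha hb hab
  have hz : a • u + b • d ∈ sphereStar d :=
    segment_subset_sphereStar hd hu ⟨a, b, ha, hb, hab, rfl⟩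
  have hw : b • v + a • d ∈ sphereStar d :=
    segment_subset_sphereStar hd hv ⟨b, a, hb, ha, by rw [add_comm, hab], rfl⟩
  refine mem_sphereStar_of_norm_le_one hd.le ?_ ?_
  · simpa using (convex_closedBall (0 : X) 1) (by simp [hu.1]) (by simp [hv.1]) ha hb hab
  · have hsum : a • u + b • d + (b • v + a • d) = a • u + b • v + d := by
      calc a • u + b • d + (b • v + a • d) = a • u + b • v + (a + b) • d := by module
        _ = a • u + b • v + d := by rw [hab, one_smul]
    rw [← hsum]
    exact h _ hz _ hw

theorem exists_dual_one_le_of_disjoint_ball {D : Set X} (hD : Convex ℝ D)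
    (hdisj : Disjoint (ball (0 : X) 1) D) :
    ∃ ψ : StrongDual ℝ X, ‖ψ‖ ≤ 1 ∧ ∀ x ∈ D, 1 ≤ ψ x := by
  obtain ⟨f, u, hfu, huf⟩ := geometric_hahn_banach_open (convex_ball 0 1) isOpen_ball hD hdisj
  have hu : 0 < u := by simpa using hfu 0 (mem_ball_self one_pos)
  have hcl : ∀ x ∈ closedBall (0 : X) 1, f x ≤ u := by
    rw [← closure_ball (0 : X) one_ne_zero]
    exact closure_minimal (fun x hx => (hfu x hx).le) (isClosed_le f.continuous continuous_const)
  have hf : ‖f‖ ≤ u := by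
    refine (f.opNorm_bound_of_ball_bound one_pos u fun x hx => ?_).trans_eq (div_one u)
    have hneg : -f x ≤ u := by simpa using hcl (-x) (by simpa using hx)
    exact abs_le.2 ⟨by linarith, hcl x hx⟩
  refine ⟨u⁻¹ • f, ?_, fun x hx => ?_⟩
  · rw [norm_smul, norm_inv, Real.norm_of_nonneg hu.le]
    exact inv_mul_le_one_of_le₀ hf hu.le
  · rw [smul_apply, smul_eq_mul, le_inv_mul_iff₀ hu, mul_one]
    exact huf x hx

theorem StrongDual.extendRCLike_apply_eq_one_iff {𝕜 : Type*} [RCLike 𝕜] [NormedSpace 𝕜 X]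
    [IsScalarTower ℝ 𝕜 X] {ψ : StrongDual ℝ X} (hψ : ‖ψ‖ ≤ 1) {x : X} (hx : ‖x‖ ≤ 1) :
    ψ.extendRCLike x = (1 : 𝕜) ↔ ψ x = 1 := by
  refine ⟨fun h => by simpa [h] using (re_extendRCLike_apply (𝕜 := 𝕜) ψ x).symm, fun h => ?_⟩
  have hre : RCLike.re (ψ.extendRCLike x : 𝕜) = 1 := by rw [re_extendRCLike_apply, h]
  have hle : ‖(ψ.extendRCLike x : 𝕜)‖ ≤ RCLike.re (ψ.extendRCLike x : 𝕜) := by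
    rw [hre]
    simpa using (ψ.extendRCLike (𝕜 := 𝕜)).le_of_opNorm_le_of_le (by rwa [norm_extendRCLike]) hx
  rw [← RCLike.re_eq_self_of_le hle, hre, RCLike.ofReal_one]

theorem exists_dual_eq_sphereStar {𝕜 : Type*} [RCLike 𝕜] [NormedSpace 𝕜 X]
    [IsScalarTower ℝ 𝕜 X] {d : X} (hd : ‖d‖ = 1)
    (h : ∀ y ∈ sphereStar d, ∀ z ∈ sphereStar d, ‖y + z‖ = 2) :
    ∃ φ : StrongDual 𝕜 X, ‖φ‖ = 1 ∧ {z | ‖z‖ = 1 ∧ φ z = 1} = sphereStar d := by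
  have hdisj : Disjoint (ball (0 : X) 1) (sphereStar d) :=
    Set.disjoint_left.2 fun y hy hy' => (mem_ball_zero_iff.1 hy).ne hy'.1
  obtain ⟨ψ, hψ, hψD⟩ := exists_dual_one_le_of_disjoint_ball (convex_sphereStar hd h) hdisj
  have hψD' : ∀ y ∈ sphereStar d, ψ y = 1 :=
    fun y hy => le_antisymm (ψ.apply_le_one hψ hy.1.le) (hψD y hy)
  have hψd : ψ d = 1 := hψD' d (self_mem_sphereStar hd)
  have hφd : ψ.extendRCLike d = (1 : 𝕜) := (ψ.extendRCLike_apply_eq_one_iff hψ hd.le).2 hψd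
  refine ⟨ψ.extendRCLike, le_antisymm (by rwa [StrongDual.norm_extendRCLike]) ?_,
    Set.ext fun z => ?_⟩
  · simpa [hφd, hd] using (ψ.extendRCLike (𝕜 := 𝕜)).le_opNorm d
  · refine ⟨fun ⟨hz, hφz⟩ => ?_, fun hz => ⟨hz.1, ?_⟩⟩
    · exact mem_sphereStar_of_dual_eq_one hψ hd.le hz.le hψd
        ((ψ.extendRCLike_apply_eq_one_iff hψ hz.le).1 hφz)
    · exact (ψ.extendRCLike_apply_eq_one_iff hψ hz.1.le).2 (hψD' z hz)

end SphereStar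

theorem eq_neg_of_norm_sub_eq_two {E : Type*} [NormedAddCommGroup E] [NormedSpace ℝ E]
    [StrictConvexSpace ℝ E] {a b : E} (ha : ‖a‖ ≤ 1) (hb : ‖b‖ ≤ 1) (h : ‖a - b‖ = 2) :
    ‖a‖ = 1 ∧ b = -a := by
  have hab := norm_sub_le a b
  have ha1 : ‖a‖ = 1 := by linarith
  have hb1 : ‖-b‖ = 1 := by rw [norm_neg]; linarith
  have heq : a = -b := eq_of_norm_eq_of_norm_add_eq (by rw [ha1, hb1])
    (by rw [← sub_eq_add_neg, h, ha1, hb1]; norm_num)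
  exact ⟨ha1, by rw [heq, neg_neg]⟩

namespace ZeroAtInftyContinuousMap

variable {α E : Type*} [TopologicalSpace α] [NormedAddCommGroup E]

theorem norm_apply_le (f : C₀(α, E)) (x : α) : ‖f x‖ ≤ ‖f‖ := by
  rw [← norm_toBCF_eq_norm]
  exact f.toBCF.norm_coe_le_norm x

theorem dist_apply_le_dist (f g : C₀(α, E)) (x : α) : dist (f x) (g x) ≤ dist f g := by
  rw [← dist_toBCF_eq_dist]
  exact BoundedContinuousFunction.dist_coe_le_dist (f := f.toBCF) (g := g.toBCF) x

theorem norm_le {f : C₀(α, E)} {C : ℝ} (hC : 0 ≤ C) : ‖f‖ ≤ C ↔ ∀ x, ‖f x‖ ≤ C := by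
  rw [← norm_toBCF_eq_norm]
  exact BoundedContinuousFunction.norm_le hC

theorem exists_norm_apply_eq_norm {f : C₀(α, E)} (hf : f ≠ 0) : ∃ x, ‖f x‖ = ‖f‖ := by
  obtain ⟨x₀, hx₀⟩ : ∃ x₀, f x₀ ≠ 0 := by
    by_contra! h
    exact hf (ext h)
  have hsmall : ∀ᶠ x in Filter.cocompact α, ‖f x‖ ≤ ‖f x₀‖ :=
    (tendsto_norm_zero.comp (zero_at_infty f)).eventually (ge_mem_nhds (norm_pos_iff.2 hx₀))
  obtain ⟨x, hx⟩ := (continuous_norm.comp f.continuous).exists_forall_ge' x₀ hsmall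
  exact ⟨x, le_antisymm (f.norm_apply_le x) ((norm_le (norm_nonneg _)).2 hx)⟩

theorem norm_sub_eq_two_iff [NormedSpace ℝ E] [StrictConvexSpace ℝ E] {f g : C₀(α, E)}
    (hf : ‖f‖ ≤ 1) (hg : ‖g‖ ≤ 1) : ‖f - g‖ = 2 ↔ ∃ x, ‖f x‖ = 1 ∧ g x = -f x := by
  constructor
  · intro h
    obtain ⟨x, hx⟩ := exists_norm_apply_eq_norm (f := f - g) fun h0 => by norm_num [h0] at h
    rw [h] at hx
    exact ⟨x, eq_neg_of_norm_sub_eq_two ((f.norm_apply_le x).trans hf)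
      ((g.norm_apply_le x).trans hg) hx⟩
  · rintro ⟨x, hx, hgx⟩
    refine le_antisymm ((norm_sub_le f g).trans (by linarith)) ?_
    calc (2 : ℝ) = ‖f x - g x‖ := by rw [hgx, sub_neg_eq_add, ← two_smul ℝ, norm_smul, hx]; norm_num
      _ ≤ ‖f - g‖ := (f - g).norm_apply_le x

end ZeroAtInftyContinuousMap

namespace IsometryEquiv

variable {α X : Type*} [PseudoMetricSpace α] [NormedAddCommGroup X]

def antipode (e : α ≃ᵢ sphere (0 : X) 1) (a : α) : α := e.symm (-e a)

variable (e : α ≃ᵢ sphere (0 : X) 1)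

theorem apply_antipode (a : α) : e (e.antipode a) = -e a := e.apply_symm_apply _

theorem antipode_antipode (a : α) : e.antipode (e.antipode a) = a := by
  simp [antipode]

theorem isometry_antipode : Isometry e.antipode := by
  refine Isometry.of_dist_eq fun a b => ?_
  rw [← e.dist_eq, ← e.dist_eq a, apply_antipode, apply_antipode, Subtype.dist_eq,
    Subtype.dist_eq, coe_neg_sphere, coe_neg_sphere, dist_neg_neg]

theorem dist_antipode_self [NormedSpace ℝ X] (a : α) : dist (e.antipode a) a = 2 := by
  rw [← e.dist_eq, apply_antipode, Subtype.dist_eq, coe_neg_sphere, dist_eq_norm,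
    ← neg_add', norm_neg, ← two_smul ℝ, norm_smul, norm_eq_of_mem_sphere]
  norm_num

end IsometryEquiv

section Sequences

variable {Γ : Type*} [TopologicalSpace Γ] [DiscreteTopology Γ] [DecidableEq Γ]

open ZeroAtInftyContinuousMap

theorem stdBasis_apply (n k : Γ) : stdBasis n k = if k = n then (1 : ℂ) else 0 := rfl

theorem norm_stdBasis (n : Γ) : ‖stdBasis n‖ = 1 := by
  refine le_antisymm ((norm_le zero_le_one).2 fun k => ?_) ?_
  · by_cases hk : k = n <;> simp [stdBasis_apply, hk]
  · simpa [stdBasis_apply] using (stdBasis n).norm_apply_le n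

theorem exists_eq_smul_stdBasis_iff (x : C₀(Γ, ℂ)) {n : Γ} {lam : ℂ} (hlam : ‖lam‖ = 1) :
    (∃ k, ‖(lam • stdBasis n) k‖ = 1 ∧ x k = (lam • stdBasis n) k) ↔ x n = lam := by
  refine ⟨fun ⟨k, hk, hxk⟩ => ?_, fun hx => ⟨n, ?_, ?_⟩⟩
  · by_cases hkn : k = n
    · simpa [hkn, stdBasis_apply] using hxk
    · simp [hkn, stdBasis_apply] at hk
  · simp [stdBasis_apply, hlam]
  · simp [stdBasis_apply, hx]

theorem exists_near_with_unique_peak {x : C₀(Γ, ℂ)} (hx : ‖x‖ ≤ 1) {k : Γ} (hk : ‖x k‖ = 1)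
    {t : ℝ} (ht₀ : 0 < t) (ht₁ : t ≤ 1) :
    ∃ y : C₀(Γ, ℂ), ‖y‖ = 1 ∧ y k = x k ∧ (∀ j ≠ k, ‖y j‖ < 1) ∧ ‖x - y‖ ≤ t := by
  have hxj : ∀ j, ‖x j‖ ≤ 1 := fun j => (x.norm_apply_le j).trans hx
  set y : C₀(Γ, ℂ) := (1 - t) • x + t • (x k • stdBasis k)
  have hy : ∀ j, y j = (1 - t) • x j + t • (x k * if j = k then 1 else 0) := fun j => by
    simp only [y, ZeroAtInftyContinuousMap.add_apply, ZeroAtInftyContinuousMap.smul_apply,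
      stdBasis_apply, smul_eq_mul]
  have hyk : y k = x k := by
    rw [hy, if_pos rfl, Complex.real_smul, Complex.real_smul]
    push_cast
    ring
  have hyj : ∀ j ≠ k, ‖y j‖ ≤ 1 - t := fun j hj => by
    rw [hy, if_neg hj, mul_zero, smul_zero, add_zero, norm_smul,
      Real.norm_of_nonneg (sub_nonneg.2 ht₁)]
    exact mul_le_of_le_one_right (sub_nonneg.2 ht₁) (hxj j)
  refine ⟨y, le_antisymm ((norm_le zero_le_one).2 fun j => ?_) ?_, hyk,
    fun j hj => (hyj j hj).trans_lt (by linarith), ?_⟩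
  · by_cases hj : j = k
    · rw [hj, hyk, hk]
    · exact (hyj j hj).trans (by linarith)
  · simpa [hyk, hk] using y.norm_apply_le k
  · have hxy : x - y = t • (x - x k • stdBasis k) := by
      simp only [y]
      module
    have hbound : ‖x - x k • stdBasis k‖ ≤ 1 := (norm_le zero_le_one).2 fun j => by
      simp only [ZeroAtInftyContinuousMap.sub_apply, ZeroAtInftyContinuousMap.smul_apply,
        stdBasis_apply, smul_eq_mul]
      split_ifs with hj
      · simp [hj]
      · simpa using hxj j
    rw [hxy, norm_smul, Real.norm_of_nonneg ht₀.le]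
    exact mul_le_of_le_one_right ht₀.le hbound

theorem apply_eq_neg_of_norm_apply_eq_one
    {σ : sphere (0 : C₀(Γ, ℂ)) 1 → sphere (0 : C₀(Γ, ℂ)) 1} (hσ : LipschitzWith 1 σ)
    (hσ₂ : ∀ x, dist (σ x) x = 2) {x : sphere (0 : C₀(Γ, ℂ)) 1} {k : Γ}
    (hk : ‖(x : C₀(Γ, ℂ)) k‖ = 1) : (σ x : C₀(Γ, ℂ)) k = -(x : C₀(Γ, ℂ)) k := by
  -- `σ` flips the unique unimodular coordinate of a nearby `y`, and `σ x` stays close to `σ y`.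
  refine eq_of_forall_dist_le fun t ht => ?_
  obtain ⟨y, hy, hyk, hyj, hxy⟩ := exists_near_with_unique_peak
    (norm_eq_of_mem_sphere x).le hk (lt_min ht one_pos) (min_le_right t 1)
  let y' : sphere (0 : C₀(Γ, ℂ)) 1 := ⟨y, mem_sphere_zero_iff_norm.2 hy⟩
  have hdist : ‖y - σ y'‖ = 2 := by rw [← dist_eq_norm, dist_comm]; exact hσ₂ y'
  obtain ⟨j, hj, hσj⟩ := (norm_sub_eq_two_iff hy.le (norm_eq_of_mem_sphere (σ y')).le).1 hdist
  obtain rfl : j = k := by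
    by_contra hjk
    exact (hyj j hjk).ne hj
  calc dist ((σ x : C₀(Γ, ℂ)) j) (-(x : C₀(Γ, ℂ)) j)
      = dist ((σ x : C₀(Γ, ℂ)) j) ((σ y' : C₀(Γ, ℂ)) j) := by rw [hσj, hyk]
    _ ≤ dist (σ x) (σ y') := dist_apply_le_dist _ _ j
    _ ≤ dist x y' := by simpa using hσ.dist_le_mul x y'
    _ ≤ t := by rw [Subtype.dist_eq, dist_eq_norm]; exact hxy.trans (min_le_left t 1)

theorem norm_add_eq_two_iff {X : Type*} [NormedAddCommGroup X] [NormedSpace ℝ X]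
    (e : sphere (0 : C₀(Γ, ℂ)) 1 ≃ᵢ sphere (0 : X) 1) (x a : sphere (0 : C₀(Γ, ℂ)) 1) :
    ‖(e x : X) + e a‖ = 2 ↔
      ∃ k, ‖(a : C₀(Γ, ℂ)) k‖ = 1 ∧ (x : C₀(Γ, ℂ)) k = (a : C₀(Γ, ℂ)) k := by
  have hflip : ∀ (b : sphere (0 : C₀(Γ, ℂ)) 1) k, ‖(b : C₀(Γ, ℂ)) k‖ = 1 →
      (e.antipode b : C₀(Γ, ℂ)) k = -(b : C₀(Γ, ℂ)) k := fun b k =>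
    apply_eq_neg_of_norm_apply_eq_one e.isometry_antipode.lipschitz e.dist_antipode_self
  have hnorm : ‖(e x : X) + e a‖ = ‖(x : C₀(Γ, ℂ)) - e.antipode a‖ := by
    rw [← dist_eq_norm, ← Subtype.dist_eq, ← e.dist_eq, e.apply_antipode, Subtype.dist_eq,
      coe_neg_sphere, dist_eq_norm, sub_neg_eq_add]
  rw [hnorm, norm_sub_eq_two_iff (norm_eq_of_mem_sphere x).le
    (norm_eq_of_mem_sphere (e.antipode a)).le]
  constructor
  · rintro ⟨k, hk, hak⟩
    have hxk := hflip (e.antipode a) k (by rw [hak, norm_neg, hk])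
    rw [e.antipode_antipode, hak, neg_neg] at hxk
    exact ⟨k, hxk ▸ hk, hxk.symm⟩
  · rintro ⟨k, hk, hxk⟩
    exact ⟨k, hxk ▸ hk, by rw [hflip a k hk, hxk]⟩

end Sequences

theorem supp_nonempty_general {Γ : Type*} [TopologicalSpace Γ] [DiscreteTopology Γ] [DecidableEq Γ]
    {X : Type*} [NormedAddCommGroup X] [NormedSpace ℂ X]
    (Δ : sphere (0 : C₀(Γ, ℂ)) 1 → sphere (0 : X) 1)
    (hΔiso : Isometry Δ) (hΔsurj : Function.Surjective Δ)
    (n : Γ) (lam : ℂ) (hlam : ‖lam‖ = 1) :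
    Set.Nonempty {φ : X →L[ℂ] ℂ | ‖φ‖ = 1 ∧
      {z : X | ‖z‖ = 1 ∧ φ z = 1} =
        (fun w : sphere (0 : X) 1 => (w : X)) ''
          (Δ '' {x : sphere (0 : C₀(Γ, ℂ)) 1 | (x : C₀(Γ, ℂ)) n = lam})} := by
  let e := IsometryEquiv.mk' Δ (Function.surjInv hΔsurj) (Function.surjInv_eq hΔsurj) hΔiso
  let a : sphere (0 : C₀(Γ, ℂ)) 1 :=
    ⟨lam • stdBasis n, by simp [norm_smul, hlam, norm_stdBasis]⟩
  have hstar : ∀ x, (Δ x : X) ∈ sphereStar (Δ a : X) ↔ (x : C₀(Γ, ℂ)) n = lam := fun x =>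
    (and_iff_right (norm_eq_of_mem_sphere (Δ x))).trans
      ((norm_add_eq_two_iff e x a).trans (exists_eq_smul_stdBasis_iff (x : C₀(Γ, ℂ)) hlam))
  have himage : sphereStar (Δ a : X) = (fun w : sphere (0 : X) 1 => (w : X)) ''
      (Δ '' {x : sphere (0 : C₀(Γ, ℂ)) 1 | (x : C₀(Γ, ℂ)) n = lam}) := by
    ext y
    refine ⟨fun hy => ?_, ?_⟩
    · obtain ⟨x, hx⟩ := hΔsurj ⟨y, mem_sphere_zero_iff_norm.2 hy.1⟩
      exact ⟨Δ x, ⟨x, (hstar x).1 (by rwa [hx]), rfl⟩, by rw [hx]⟩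
    · rintro ⟨_, ⟨x, hx, rfl⟩, rfl⟩
      exact (hstar x).2 hx
  obtain ⟨φ, hφ, hface⟩ := exists_dual_eq_sphereStar (𝕜 := ℂ) (norm_eq_of_mem_sphere (Δ a)) <| by
    rw [himage]
    rintro _ ⟨_, ⟨x, hx, rfl⟩, rfl⟩ _ ⟨_, ⟨x', hx', rfl⟩, rfl⟩
    exact (norm_add_eq_two_iff e x x').2 ⟨n, by rw [hx', hlam], by rw [hx, hx']⟩
  exact ⟨φ, hφ, hface.trans himage⟩

/-- The support set of functionals determined by the image of the maximal face
`A(n,λ) = {x ∈ S(c₀(Γ)) : x n = λ}` under a surjective isometry of spheres is nonempty. -/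
theorem supp_nonempty {Γ : Type*} [TopologicalSpace Γ] [DiscreteTopology Γ] [DecidableEq Γ]
    [Infinite Γ]
    {X : Type*} [NormedAddCommGroup X] [NormedSpace ℂ X] [CompleteSpace X]
    (Δ : sphere (0 : C₀(Γ, ℂ)) 1 → sphere (0 : X) 1)
    (hΔiso : Isometry Δ) (hΔsurj : Function.Surjective Δ)
    (n : Γ) (lam : ℂ) (hlam : ‖lam‖ = 1) :
    Set.Nonempty {φ : X →L[ℂ] ℂ | ‖φ‖ = 1 ∧
      {z : X | ‖z‖ = 1 ∧ φ z = 1} =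
        (fun w : sphere (0 : X) 1 => (w : X)) ''
          (Δ '' {x : sphere (0 : C₀(Γ, ℂ)) 1 | (x : C₀(Γ, ℂ)) n = lam})} :=
  supp_nonempty_general Δ hΔiso hΔsurj n lam hlam
end

section
/- Let X be a complex Banach space and Δ : S(c₀(Γ)) → S(X) a surjective isometry. For n₀ ≠ n₁ in Γ and λ, μ ∈ 𝕋, if φ₀, φ₁ are norm-one functionals on X with φ₀⁻¹({1}) = Δ(A(n₀,λ)) and φ₁⁻¹({1}) = Δ(A(n₁,μ)), then φ₀ ≠ φ₁. That is, supp(n₀,λ) ∩ supp(n₁,μ) = ∅. -/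
open ZeroAtInfty Metric

/-- Support functionals associated to faces over distinct coordinates are distinct:
`supp(n₀,λ) ∩ supp(n₁,μ) = ∅` whenever `n₀ ≠ n₁`. -/
theorem supp_distinct_coordinates {Γ : Type*} [TopologicalSpace Γ] [DiscreteTopology Γ]
    [DecidableEq Γ] [Infinite Γ]
    {X : Type*} [NormedAddCommGroup X] [NormedSpace ℂ X] [CompleteSpace X]
    (Δ : sphere (0 : C₀(Γ, ℂ)) 1 → sphere (0 : X) 1)
    (hΔiso : Isometry Δ) (hΔsurj : Function.Surjective Δ)
    (n₀ n₁ : Γ) (hne : n₀ ≠ n₁) (lam μ : ℂ) (hlam : ‖lam‖ = 1) (hμ : ‖μ‖ = 1)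
    (φ₀ φ₁ : X →L[ℂ] ℂ) (hφ₀ : ‖φ₀‖ = 1) (hφ₁ : ‖φ₁‖ = 1)
    (hface₀ : {z : X | ‖z‖ = 1 ∧ φ₀ z = 1} =
      (fun w : sphere (0 : X) 1 => (w : X)) ''
        (Δ '' {x : sphere (0 : C₀(Γ, ℂ)) 1 | (x : C₀(Γ, ℂ)) n₀ = lam}))
    (hface₁ : {z : X | ‖z‖ = 1 ∧ φ₁ z = 1} =
      (fun w : sphere (0 : X) 1 => (w : X)) ''
        (Δ '' {x : sphere (0 : C₀(Γ, ℂ)) 1 | (x : C₀(Γ, ℂ)) n₁ = μ})) :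
    φ₀ ≠ φ₁ := by
  -- the witness vector: lam at n₀, -μ at n₁
  set x : C₀(Γ, ℂ) := lam • stdBasis n₀ + (-μ) • stdBasis n₁ with hxdef
  have hx_apply : ∀ k, x k = lam * (if k = n₀ then 1 else 0) + (-μ) * (if k = n₁ then 1 else 0) := by
    intro k; simp [hxdef, stdBasis]; split <;> simp
  have hx0 : x n₀ = lam := by simp [hx_apply, hne]
  have hx1 : x n₁ = -μ := by simp [hx_apply, hne.symm]
  have hxnorm : ‖x‖ = 1 := by
    have hle : ‖x‖ ≤ 1 := by
      rw [← ZeroAtInftyContinuousMap.norm_toBCF_eq_norm]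
      refine (BoundedContinuousFunction.norm_le zero_le_one).2 fun k => ?_
      have : x.toBCF k = x k := rfl
      rw [this, hx_apply k]
      by_cases h0 : k = n₀ <;> by_cases h1 : k = n₁ <;>
        simp_all [hlam, hμ]
    have hge : (1 : ℝ) ≤ ‖x‖ := by
      have : ‖x n₀‖ ≤ ‖x‖ := by
        rw [← ZeroAtInftyContinuousMap.norm_toBCF_eq_norm]
        exact BoundedContinuousFunction.norm_coe_le_norm x.toBCF n₀
      rw [hx0, hlam] at this; exact this
    linarith
  have hxmem : x ∈ sphere (0 : C₀(Γ, ℂ)) 1 := by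
    simpa [mem_sphere_zero_iff_norm] using hxnorm
  set xs : sphere (0 : C₀(Γ, ℂ)) 1 := ⟨x, hxmem⟩ with hxs
  -- φ₀ (Δ xs) = 1
  have hmem0 : ((Δ xs : X) : X) ∈ {z : X | ‖z‖ = 1 ∧ φ₀ z = 1} := by
    rw [hface₀]
    exact ⟨Δ xs, ⟨xs, by simpa [hxs] using hx0, rfl⟩, rfl⟩
  intro hEq
  have hmem1 : ((Δ xs : X) : X) ∈ {z : X | ‖z‖ = 1 ∧ φ₁ z = 1} := by
    rw [← hEq]; exact hmem0
  rw [hface₁] at hmem1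
  obtain ⟨w, ⟨y, hy, hyw⟩, hw⟩ := hmem1
  have hΔinj : Function.Injective Δ := hΔiso.injective
  have : y = xs := by
    apply hΔinj
    rw [hyw]
    exact Subtype.ext hw
  rw [this] at hy
  have : x n₁ = μ := hy
  rw [hx1] at this
  have : μ = 0 := by linear_combination -this / 2
  simp [this] at hμ
end

section
/- Let X be a complex Banach space, Δ : S(c₀(Γ)) → S(X) a surjective isometry, n₀ ∈ Γ, λ ∈ 𝕋, and φ a norm-one functional on X with φ⁻¹({1}) = Δ(A(n₀,λ)). Then φ(Δ(x)) = 0 for every x ∈ S(c₀(Γ)) with x(n₀) = 0. -/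
open ZeroAtInfty Metric

lemma c0_norm_apply_le {Γ : Type*} [TopologicalSpace Γ] (f : C₀(Γ, ℂ)) (n : Γ) :
    ‖f n‖ ≤ ‖f‖ := by
  rw [← ZeroAtInftyContinuousMap.norm_toBCF_eq_norm]
  exact f.toBCF.norm_coe_le_norm n

lemma c0_norm_le' {Γ : Type*} [TopologicalSpace Γ] (f : C₀(Γ, ℂ)) {C : ℝ} (hC : 0 ≤ C)
    (h : ∀ n, ‖f n‖ ≤ C) : ‖f‖ ≤ C := by
  rw [← ZeroAtInftyContinuousMap.norm_toBCF_eq_norm]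
  exact (BoundedContinuousFunction.norm_le hC).2 h

lemma eq_of_norm_add_eq_two {a b : ℂ} (ha : ‖a‖ = 1) (hb : ‖b‖ = 1) (hab : ‖a + b‖ = 2) :
    a = b := by
  have hpar := parallelogram_law_with_norm ℝ a b
  rw [ha, hb, hab] at hpar
  have h0 : ‖a - b‖ = 0 := by nlinarith [norm_nonneg (a - b)]
  exact sub_eq_zero.mp (norm_eq_zero.mp h0)

lemma zero_of_two_disks {c : ℂ} (h1 : ‖c - 1‖ ≤ 1) (h2 : ‖c + 1‖ ≤ 1) : c = 0 := by
  have hpar := parallelogram_law_with_norm ℝ c 1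
  rw [norm_one] at hpar
  have h0 : ‖c‖ = 0 := by
    nlinarith [norm_nonneg c, norm_nonneg (c - 1), norm_nonneg (c + 1)]
  exact norm_eq_zero.mp h0

/-- A support functional for the face `A(n₀,λ)` annihilates `Δ(x)` whenever `x(n₀) = 0`. -/
theorem supp_vanishes {Γ : Type*} [TopologicalSpace Γ] [DiscreteTopology Γ]
    [DecidableEq Γ] [Infinite Γ]
    {X : Type*} [NormedAddCommGroup X] [NormedSpace ℂ X] [CompleteSpace X]
    (Δ : sphere (0 : C₀(Γ, ℂ)) 1 → sphere (0 : X) 1)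
    (hΔiso : Isometry Δ) (hΔsurj : Function.Surjective Δ)
    (n₀ : Γ) (lam : ℂ) (hlam : ‖lam‖ = 1)
    (φ : X →L[ℂ] ℂ) (hφ : ‖φ‖ = 1)
    (hface : {z : X | ‖z‖ = 1 ∧ φ z = 1} =
      (fun w : sphere (0 : X) 1 => (w : X)) ''
        (Δ '' {x : sphere (0 : C₀(Γ, ℂ)) 1 | (x : C₀(Γ, ℂ)) n₀ = lam})) :
    ∀ x : sphere (0 : C₀(Γ, ℂ)) 1, (x : C₀(Γ, ℂ)) n₀ = 0 → φ (Δ x) = 0 := by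
  classical
  -- basic facts
  have hdist : ∀ a b : sphere (0 : C₀(Γ, ℂ)) 1,
      ‖(Δ a : X) - (Δ b : X)‖ = ‖(a : C₀(Γ, ℂ)) - (b : C₀(Γ, ℂ))‖ := by
    intro a b
    have := hΔiso.dist_eq a b
    rwa [Subtype.dist_eq, Subtype.dist_eq, dist_eq_norm, dist_eq_norm] at this
  have hA : ∀ y : sphere (0 : C₀(Γ, ℂ)) 1, (y : C₀(Γ, ℂ)) n₀ = lam → φ (Δ y) = 1 := by
    intro y hy
    have hmem : ((Δ y : X)) ∈ {z : X | ‖z‖ = 1 ∧ φ z = 1} := by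
      rw [hface]
      exact ⟨Δ y, ⟨y, hy, rfl⟩, rfl⟩
    exact hmem.2
  set p : C₀(Γ, ℂ) := lam • stdBasis n₀ with hp
  have hp_apply : ∀ k, p k = if k = n₀ then lam else 0 := by
    intro k
    simp only [hp, ZeroAtInftyContinuousMap.coe_smul, Pi.smul_apply, smul_eq_mul]
    by_cases h : k = n₀ <;> simp [stdBasis, h]
  have hpnorm : ‖p‖ = 1 := by
    refine le_antisymm (c0_norm_le' _ zero_le_one ?_) ?_
    · intro n
      rw [hp_apply]
      by_cases h : n = n₀ <;> simp [h, hlam]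
    · calc (1 : ℝ) = ‖p n₀‖ := by rw [hp_apply]; simp [hlam]
        _ ≤ ‖p‖ := c0_norm_apply_le _ _
  have hypmem : p ∈ sphere (0 : C₀(Γ, ℂ)) 1 := by
    rwa [mem_sphere_zero_iff_norm]
  have hynmem : -p ∈ sphere (0 : C₀(Γ, ℂ)) 1 := by
    rwa [mem_sphere_zero_iff_norm, norm_neg]
  set yp : sphere (0 : C₀(Γ, ℂ)) 1 := ⟨p, hypmem⟩ with hyp
  set yn : sphere (0 : C₀(Γ, ℂ)) 1 := ⟨-p, hynmem⟩ with hyn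
  have hφp : φ (Δ yp) = 1 := hA yp (by simp [hyp, hp_apply])
  -- the negative basis vector goes to `-1`
  have hunorm : ‖(Δ yn : X)‖ = 1 := mem_sphere_zero_iff_norm.mp (Δ yn).2
  obtain ⟨w, hw⟩ := hΔsurj ⟨-(Δ yn : X), by rwa [mem_sphere_zero_iff_norm, norm_neg]⟩
  have hwv : (Δ w : X) = -(Δ yn : X) := by rw [hw]
  have hwnorm : ‖(w : C₀(Γ, ℂ))‖ = 1 := mem_sphere_zero_iff_norm.mp w.2
  have hd2 : ‖(w : C₀(Γ, ℂ)) + p‖ = 2 := by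
    have h1 : ‖(Δ w : X) - (Δ yn : X)‖ = 2 := by
      rw [hwv, show -(Δ yn : X) - (Δ yn : X) = (-2 : ℂ) • (Δ yn : X) from by module,
        norm_smul, hunorm]
      simp
    have h2 := hdist w yn
    rw [h1] at h2
    have : ((yn : sphere (0 : C₀(Γ, ℂ)) 1) : C₀(Γ, ℂ)) = -p := rfl
    rw [this, sub_neg_eq_add] at h2
    exact h2.symm
  have hwn₀ : (w : C₀(Γ, ℂ)) n₀ = lam := by
    set g : C₀(Γ, ℂ) := (w : C₀(Γ, ℂ)) + p with hg
    have hg_apply : ∀ k, g k = (w : C₀(Γ, ℂ)) k + p k := fun k => rfl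
    have hgle : ‖g‖ ≤ max ‖g n₀‖ 1 := by
      refine c0_norm_le' _ (le_max_of_le_right zero_le_one) ?_
      intro n
      by_cases h : n = n₀
      · subst h; exact le_max_left _ _
      · refine le_max_of_le_right ?_
        rw [hg_apply, hp_apply, if_neg h, add_zero]
        calc ‖(w : C₀(Γ, ℂ)) n‖ ≤ ‖(w : C₀(Γ, ℂ))‖ := c0_norm_apply_le _ _
          _ = 1 := hwnorm
    rw [hd2] at hgle
    have hge2 : (2 : ℝ) ≤ ‖g n₀‖ := by
      rcases le_max_iff.mp hgle with h | h
      · exact h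
      · linarith
    have hwle : ‖(w : C₀(Γ, ℂ)) n₀‖ ≤ 1 := (c0_norm_apply_le _ _).trans hwnorm.le
    have hgn₀ : g n₀ = (w : C₀(Γ, ℂ)) n₀ + lam := by
      rw [hg_apply, hp_apply]; simp
    rw [hgn₀] at hge2
    have hub : ‖(w : C₀(Γ, ℂ)) n₀ + lam‖ ≤ ‖(w : C₀(Γ, ℂ)) n₀‖ + ‖lam‖ := norm_add_le _ _
    have hw1 : ‖(w : C₀(Γ, ℂ)) n₀‖ = 1 := by rw [hlam] at hub; linarith
    have hsum : ‖(w : C₀(Γ, ℂ)) n₀ + lam‖ = 2 := by rw [hlam] at hub; linarith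
    exact eq_of_norm_add_eq_two hw1 hlam hsum
  have hφw : φ (Δ w) = 1 := hA w hwn₀
  have hφn : φ (Δ yn) = -1 := by
    have : ((Δ yn : X)) = -(Δ w : X) := by rw [hwv]; simp
    rw [this, map_neg, hφw]
  -- now the main computation
  intro x hx
  have hxnorm : ‖(x : C₀(Γ, ℂ))‖ = 1 := mem_sphere_zero_iff_norm.mp x.2
  have hnorm_sub : ∀ s : ℂ, ‖s‖ = 1 → ‖(x : C₀(Γ, ℂ)) - s • p‖ = 1 := by
    intro s hs
    refine le_antisymm (c0_norm_le' _ zero_le_one ?_) ?_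
    · intro n
      by_cases h : n = n₀
      · subst h
        simp only [ZeroAtInftyContinuousMap.coe_sub, Pi.sub_apply,
          ZeroAtInftyContinuousMap.coe_smul, Pi.smul_apply, smul_eq_mul]
        rw [hx, hp_apply, if_pos rfl, zero_sub, norm_neg, norm_mul, hs, hlam, one_mul]
      · simp only [ZeroAtInftyContinuousMap.coe_sub, Pi.sub_apply,
          ZeroAtInftyContinuousMap.coe_smul, Pi.smul_apply, smul_eq_mul]
        rw [hp_apply, if_neg h, mul_zero, sub_zero]
        calc ‖(x : C₀(Γ, ℂ)) n‖ ≤ ‖(x : C₀(Γ, ℂ))‖ := c0_norm_apply_le _ _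
          _ = 1 := hxnorm
    · have : ‖((x : C₀(Γ, ℂ)) - s • p) n₀‖ = 1 := by
        simp only [ZeroAtInftyContinuousMap.coe_sub, Pi.sub_apply,
          ZeroAtInftyContinuousMap.coe_smul, Pi.smul_apply, smul_eq_mul]
        rw [hx, hp_apply, if_pos rfl, zero_sub, norm_neg, norm_mul, hs, hlam, one_mul]
      calc (1 : ℝ) = ‖((x : C₀(Γ, ℂ)) - s • p) n₀‖ := this.symm
        _ ≤ _ := c0_norm_apply_le _ _
  have hxp1 : ‖(x : C₀(Γ, ℂ)) - p‖ = 1 := by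
    have := hnorm_sub 1 (by simp)
    rwa [one_smul] at this
  have hxn1 : ‖(x : C₀(Γ, ℂ)) + p‖ = 1 := by
    have := hnorm_sub (-1) (by simp)
    rwa [neg_one_smul ℂ p, sub_neg_eq_add] at this
  have key : ∀ y : sphere (0 : C₀(Γ, ℂ)) 1, ‖φ (Δ x) - φ (Δ y)‖ ≤
      ‖(x : C₀(Γ, ℂ)) - (y : C₀(Γ, ℂ))‖ := by
    intro y
    calc ‖φ (Δ x) - φ (Δ y)‖ = ‖φ ((Δ x : X) - (Δ y : X))‖ := by rw [map_sub]
      _ ≤ ‖φ‖ * ‖(Δ x : X) - (Δ y : X)‖ := φ.le_opNorm _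
      _ = ‖(x : C₀(Γ, ℂ)) - (y : C₀(Γ, ℂ))‖ := by rw [hφ, one_mul, hdist]
  have hb1 : ‖φ (Δ x) - 1‖ ≤ 1 := by
    have := key yp
    rwa [hφp, show ((yp : sphere (0 : C₀(Γ, ℂ)) 1) : C₀(Γ, ℂ)) = p from rfl, hxp1] at this
  have hb2 : ‖φ (Δ x) + 1‖ ≤ 1 := by
    have := key yn
    rw [hφn, show ((yn : sphere (0 : C₀(Γ, ℂ)) 1) : C₀(Γ, ℂ)) = -p from rfl,
      sub_neg_eq_add, sub_neg_eq_add, hxn1] at this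
    exact this
  exact zero_of_two_disks hb1 hb2
end

section
/- Let {x₁, …, x_m} be a subset of the unit sphere of a complex normed space X. Then {x₁, …, x_m} is completely M-orthogonal (i.e., ‖∑_{j=1}^m α_j x_j‖ = max_j |α_j| for all α₁,…,α_m ∈ ℂ) if and only if ‖∑_{j=1}^m α_j x_j‖ = 1 for every choice of α₁,…,α_m in the unit circle 𝕋. -/
/-!
Unimodular sums of norm at most one force `∑ⱼ |f xⱼ| ≤ 1` for every `f` in the dual unit ball:
rotate each coefficient so that `αⱼ f xⱼ = |f xⱼ|`. Conversely this dual condition bounds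
`‖∑ αⱼ xⱼ‖` by `maxⱼ |αⱼ|` through a norming functional of the sum, and a norming functional
of `x_k` must vanish on every other `xⱼ`, which gives `|α_k| ≤ ‖∑ αⱼ xⱼ‖`.
-/

open Finset

section Dual

variable {𝕜 X ι : Type*} [RCLike 𝕜] [NormedAddCommGroup X] [NormedSpace 𝕜 X] [Fintype ι]
  {x : ι → X}

theorem sum_norm_apply_le_one_of_unimodular
    (H : ∀ α : ι → 𝕜, (∀ j, ‖α j‖ = 1) → ‖∑ j, α j • x j‖ ≤ 1)
    (f : StrongDual 𝕜 X) (hf : ‖f‖ ≤ 1) : ∑ j, ‖f (x j)‖ ≤ 1 := by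
  choose α hα_norm hα using fun j => RCLike.exists_norm_eq_mul_self (f (x j))
  have hsum : ((∑ j, ‖f (x j)‖ : ℝ) : 𝕜) = f (∑ j, α j • x j) := by
    simp only [map_sum, map_smul, smul_eq_mul, hα]
  calc ∑ j, ‖f (x j)‖ = ‖((∑ j, ‖f (x j)‖ : ℝ) : 𝕜)‖ := by
        rw [RCLike.norm_ofReal, abs_of_nonneg (sum_nonneg fun j _ => norm_nonneg _)]
    _ = ‖f (∑ j, α j • x j)‖ := by rw [hsum]
    _ ≤ ‖f‖ * ‖∑ j, α j • x j‖ := f.le_opNorm _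
    _ ≤ 1 * 1 := mul_le_mul hf (H α hα_norm) (norm_nonneg _) zero_le_one
    _ = 1 := one_mul 1

variable (hx : ∀ f : StrongDual 𝕜 X, ‖f‖ ≤ 1 → ∑ j, ‖f (x j)‖ ≤ 1)
include hx

theorem norm_sum_smul_le_of_sum_norm_apply_le_one {α : ι → 𝕜} {M : ℝ} (hM : 0 ≤ M)
    (hα : ∀ j, ‖α j‖ ≤ M) : ‖∑ j, α j • x j‖ ≤ M := by
  obtain ⟨f, hf, hfy⟩ := exists_dual_vector'' 𝕜 (∑ j, α j • x j)
  calc ‖∑ j, α j • x j‖ = ‖f (∑ j, α j • x j)‖ := by rw [hfy, RCLike.norm_ofReal, abs_norm]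
    _ ≤ ∑ j, ‖f (α j • x j)‖ := by rw [map_sum]; exact norm_sum_le _ _
    _ = ∑ j, ‖α j‖ * ‖f (x j)‖ := by simp only [map_smul, smul_eq_mul, norm_mul]
    _ ≤ ∑ j, M * ‖f (x j)‖ :=
        sum_le_sum fun j _ => mul_le_mul_of_nonneg_right (hα j) (norm_nonneg _)
    _ = M * ∑ j, ‖f (x j)‖ := (mul_sum _ _ _).symm
    _ ≤ M * 1 := mul_le_mul_of_nonneg_left (hx f hf) hM
    _ = M := mul_one M

theorem apply_eq_zero_of_sum_norm_apply_le_one {f : StrongDual 𝕜 X} (hf : ‖f‖ ≤ 1) {k : ι}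
    (hk : ‖f (x k)‖ = 1) {j : ι} (hjk : j ≠ k) : f (x j) = 0 := by
  classical
  have hrest : ∑ i ∈ univ.erase k, ‖f (x i)‖ ≤ 0 := by
    have := add_sum_erase univ (fun i => ‖f (x i)‖) (mem_univ k)
    linarith [hx f hf]
  exact norm_eq_zero.mp <| le_antisymm
    ((single_le_sum (f := fun i => ‖f (x i)‖) (fun i _ => norm_nonneg _) (mem_erase.mpr ⟨hjk, mem_univ j⟩)).trans hrest)
    (norm_nonneg _)

theorem norm_le_norm_sum_smul {k : ι} (hxk : ‖x k‖ = 1) (α : ι → 𝕜) :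
    ‖α k‖ ≤ ‖∑ j, α j • x j‖ := by
  obtain ⟨f, hf, hfk⟩ := exists_dual_vector'' 𝕜 (x k)
  rw [hxk, RCLike.ofReal_one] at hfk
  have hfα : f (∑ j, α j • x j) = α k := by
    rw [map_sum, sum_eq_single k]
    · rw [map_smul, hfk, smul_eq_mul, mul_one]
    · intro j _ hjk
      rw [map_smul, apply_eq_zero_of_sum_norm_apply_le_one hx hf (by rw [hfk, norm_one]) hjk,
        smul_zero]
    · exact fun hk => absurd (mem_univ k) hk
  calc ‖α k‖ = ‖f (∑ j, α j • x j)‖ := by rw [hfα]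
    _ ≤ ‖f‖ * ‖∑ j, α j • x j‖ := f.le_opNorm _
    _ ≤ ‖∑ j, α j • x j‖ := mul_le_of_le_one_left (norm_nonneg _) hf

end Dual

/-- A family `x₁, …, x_m` of norm-one elements of a complex normed space is completely
`M`-orthogonal if and only if `‖∑ αⱼ xⱼ‖ = 1` for all unimodular coefficients `αⱼ`. -/
theorem completely_M_orthogonal_iff_unimodular {X : Type*} [NormedAddCommGroup X]
    [NormedSpace ℂ X] (m : ℕ) (hm : 0 < m) (x : Fin m → X) (hx : ∀ j, ‖x j‖ = 1) :
    (∀ α : Fin m → ℂ, ‖∑ j, α j • x j‖ =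
        Finset.univ.sup' (Finset.univ_nonempty_iff.mpr (Fin.pos_iff_nonempty.mp hm))
          (fun j => ‖α j‖)) ↔
      (∀ α : Fin m → ℂ, (∀ j, ‖α j‖ = 1) → ‖∑ j, α j • x j‖ = 1) := by
  have hne : (univ : Finset (Fin m)).Nonempty :=
    univ_nonempty_iff.mpr (Fin.pos_iff_nonempty.mp hm)
  constructor
  · intro hM α hα
    rw [hM α, show (fun j => ‖α j‖) = fun _ => (1 : ℝ) from funext hα, sup'_const]
  · intro H α
    have hdual := sum_norm_apply_le_one_of_unimodular fun β hβ => (H β hβ).le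
    obtain ⟨k, -, hk⟩ := exists_mem_eq_sup' hne fun j => ‖α j‖
    refine le_antisymm ?_ ?_
    · have hle (j : Fin m) : ‖α j‖ ≤ univ.sup' hne fun j => ‖α j‖ :=
        le_sup' (fun j => ‖α j‖) (mem_univ j)
      exact norm_sum_smul_le_of_sum_norm_apply_le_one hdual ((norm_nonneg _).trans (hle k)) hle
    · exact hk ▸ norm_le_norm_sum_smul hdual (hx k) α
end
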